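/- arXiv:1007.1834 — 5 statements merged into one kernel-verified Lean document; each statement's English description precedes it below -/
import Mathlib

section
/- Let m ≥ n > d > 0 be integers. Let F̃, G̃ ∈ ℂ[x] with deg F̃ = m and deg G̃ = n, and let A, B ∈ ℂ[x] with deg A ≤ n−d, deg B ≤ m−d, (A,B) ≠ (0,0), A·F̃ + B·G̃ = 0, and suppose the greatest common divisor of F̃ and G̃ has degree at most d. Let v₁, v₂ ∈ ℝ^{m+n−2d+2} be the real and imaginary parts, respectively, of the concatenated coefficient vector of (A,B); let N₁ = N_{d−1}(F̃_Re, G̃_Re) and N₂ = N_{d−1}(F̃_Im, G̃_Im); and let A₁ = [C_m^{n−d}(A_Re) | C_n^{m−d}(B_Re)] and A₂ = [C_m^{n−d}(A_Im) | C_n^{m−d}(B_Im)] (real matrices with m+n−d+1 rows and m+n+2 columns). Then the real block matrix J of size (2(m+n−d+1)+1) × (2(m+n+2) + 2(m+n−2d+2)) given by J = [[0, 0, 2·v₁ᵗ, 2·v₂ᵗ], [A₁, −A₂, N₁, −N₂], [A₂, A₁, N₂, N₁]] has full rank, i.e., rank(J) = 2(m+n−d+1)+1. -/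
/-!
A real row relation `(c, λ₁, λ₂)` of `J` amounts to a complex row vector `μ = λ₁ - iλ₂`, read as
a linear functional `φ` on polynomials of degree `≤ m+n-d`, such that `φ` kills `A·xᵏ` (`k ≤ m`)
and `B·xᵏ` (`k ≤ n`) and sends `F·xᵗ`, `G·xᵗ` to `-2c` times the conjugated coefficients of `A`,
`B`. Applying `φ` to `A·F + B·G = 0` gives `-2c (‖A‖² + ‖B‖²) = 0`, so `c = 0`. The gcd bound
forces `A` and `B` to be coprime with `deg B = m-d`, so every polynomial of degree `≤ m+n-d` lies
in `A·ℂ[x]_{≤m} + B·ℂ[x]_{≤n}`; hence `φ = 0` and the relation is trivial.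
-/

open Polynomial

/-- Entry `(i,j)` of the multiplication matrix `C_k^r(P)`: the coefficient of
`x^{r+k-i}` in `x^{k-j}·P`, i.e. `P.coeff (r + j - i)` when `i ≤ r + j` and `0` otherwise. -/
noncomputable def convEntry {K : Type*} [Semiring K] (r : ℕ) (P : K[X]) (i j : ℕ) : K :=
  if i ≤ r + j then P.coeff (r + j - i) else 0

/-- Entry function of the `(d−1)`-th subresultant matrix
`N_{d−1}(F,G) = [C_{n−d}^m(F) | C_{m−d}^n(G)]`, with `m+n−d+1` rows and
`m+n−2d+2` columns. -/
noncomputable def subresEntry {K : Type*} [Semiring K] (m n d : ℕ) (F G : K[X])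
    (i j : ℕ) : K :=
  if j ≤ n - d then convEntry m F i j else convEntry n G i (j - (n - d + 1))

/-- Entry function of the horizontal concatenation `[C_m^{n-d}(A) | C_n^{m-d}(B)]`,
a matrix with `m+n-d+1` rows and `m+n+2` columns. -/
noncomputable def cofactorEntry {K : Type*} [Semiring K] (m n d : ℕ) (A B : K[X])
    (i j : ℕ) : K :=
  if j ≤ m then convEntry (n - d) A i j else convEntry (m - d) B i (j - (m + 1))

/-- The `j`-th entry of the concatenated coefficient vector
`(a_{n−d}, …, a_0, b_{m−d}, …, b_0)` of the pair `(A, B)`. -/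
noncomputable def cofactorVec (m n d : ℕ) (A B : ℂ[X]) (j : ℕ) : ℂ :=
  if j ≤ n - d then A.coeff (n - d - j) else B.coeff (m - d - (j - (n - d + 1)))

/-- The real part of a complex polynomial, taken coefficientwise. -/
noncomputable def rePoly (P : ℂ[X]) : ℝ[X] :=
  Polynomial.ofFinsupp (AddMonoidAlgebra.ofCoeff (P.toFinsupp.coeff.mapRange Complex.re Complex.zero_re))

/-- The imaginary part of a complex polynomial, taken coefficientwise. -/
noncomputable def imPoly (P : ℂ[X]) : ℝ[X] :=
  Polynomial.ofFinsupp (AddMonoidAlgebra.ofCoeff (P.toFinsupp.coeff.mapRange Complex.im Complex.zero_im))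

/-- The Jacobian matrix `J = [[0, 0, 2·v₁ᵗ, 2·v₂ᵗ], [A₁, −A₂, N₁, −N₂], [A₂, A₁, N₂, N₁]]`
of size `(2(m+n−d+1)+1) × (2(m+n+2) + 2(m+n−2d+2))`, where
`v₁`, `v₂` are the real and imaginary parts of the concatenated coefficient vector of
`(A,B)`, `N₁ = N_{d−1}(F_Re, G_Re)`, `N₂ = N_{d−1}(F_Im, G_Im)`,
`A₁ = [C_m^{n−d}(A_Re) | C_n^{m−d}(B_Re)]` and `A₂ = [C_m^{n−d}(A_Im) | C_n^{m−d}(B_Im)]`. -/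
noncomputable def Jmat (m n d : ℕ) (F G A B : ℂ[X]) :
    Matrix (Unit ⊕ Fin (m + n - d + 1) ⊕ Fin (m + n - d + 1))
      ((Fin (m + n + 2) ⊕ Fin (m + n + 2)) ⊕
        (Fin (m + n - 2*d + 2) ⊕ Fin (m + n - 2*d + 2))) ℝ :=
  Matrix.of fun i j =>
    match i, j with
    | Sum.inl _, Sum.inl _ => 0
    | Sum.inl _, Sum.inr (Sum.inl j) => 2 * (cofactorVec m n d A B (j : ℕ)).re
    | Sum.inl _, Sum.inr (Sum.inr j) => 2 * (cofactorVec m n d A B (j : ℕ)).im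
    | Sum.inr (Sum.inl i), Sum.inl (Sum.inl j) =>
        cofactorEntry m n d (rePoly A) (rePoly B) (i : ℕ) (j : ℕ)
    | Sum.inr (Sum.inl i), Sum.inl (Sum.inr j) =>
        -(cofactorEntry m n d (imPoly A) (imPoly B) (i : ℕ) (j : ℕ))
    | Sum.inr (Sum.inl i), Sum.inr (Sum.inl j) =>
        subresEntry m n d (rePoly F) (rePoly G) (i : ℕ) (j : ℕ)
    | Sum.inr (Sum.inl i), Sum.inr (Sum.inr j) =>
        -(subresEntry m n d (imPoly F) (imPoly G) (i : ℕ) (j : ℕ))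
    | Sum.inr (Sum.inr i), Sum.inl (Sum.inl j) =>
        cofactorEntry m n d (imPoly A) (imPoly B) (i : ℕ) (j : ℕ)
    | Sum.inr (Sum.inr i), Sum.inl (Sum.inr j) =>
        cofactorEntry m n d (rePoly A) (rePoly B) (i : ℕ) (j : ℕ)
    | Sum.inr (Sum.inr i), Sum.inr (Sum.inl j) =>
        subresEntry m n d (imPoly F) (imPoly G) (i : ℕ) (j : ℕ)
    | Sum.inr (Sum.inr i), Sum.inr (Sum.inr j) =>
        subresEntry m n d (rePoly F) (rePoly G) (i : ℕ) (j : ℕ)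

open ComplexConjugate

lemma rePoly_coeff (P : ℂ[X]) (t : ℕ) : (rePoly P).coeff t = (P.coeff t).re := by
  simp [rePoly, Polynomial.coeff]

lemma imPoly_coeff (P : ℂ[X]) (t : ℕ) : (imPoly P).coeff t = (P.coeff t).im := by
  simp [imPoly, Polynomial.coeff]

section CoeffwiseMap

variable {K L : Type*} [Semiring K] [Semiring L] {f : K → L}

lemma convEntry_of_coeff (hf : f 0 = 0) {P : K[X]} {Q : L[X]}
    (hQ : ∀ t, Q.coeff t = f (P.coeff t)) (r i j : ℕ) :
    convEntry r Q i j = f (convEntry r P i j) := by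
  unfold convEntry; split_ifs <;> simp [hQ, hf]

lemma subresEntry_of_coeff (hf : f 0 = 0) {F G : K[X]} {F' G' : L[X]}
    (hF : ∀ t, F'.coeff t = f (F.coeff t)) (hG : ∀ t, G'.coeff t = f (G.coeff t))
    (m n d i j : ℕ) :
    subresEntry m n d F' G' i j = f (subresEntry m n d F G i j) := by
  unfold subresEntry; split_ifs <;> simp [convEntry_of_coeff hf hF, convEntry_of_coeff hf hG]

lemma cofactorEntry_of_coeff (hf : f 0 = 0) {A B : K[X]} {A' B' : L[X]}
    (hA : ∀ t, A'.coeff t = f (A.coeff t)) (hB : ∀ t, B'.coeff t = f (B.coeff t))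
    (m n d i j : ℕ) :
    cofactorEntry m n d A' B' i j = f (cofactorEntry m n d A B i j) := by
  unfold cofactorEntry; split_ifs <;> simp [convEntry_of_coeff hf hA, convEntry_of_coeff hf hB]

end CoeffwiseMap

section RealCombination

variable {ι : Type*} [Fintype ι] (a b : ι → ℝ) (z : ι → ℂ)

lemma re_sum_mk_mul :
    (∑ i, (⟨a i, -b i⟩ : ℂ) * z i).re = ∑ i, a i * (z i).re + ∑ i, b i * (z i).im := by
  simp only [Complex.re_sum, Complex.mul_re, ← Finset.sum_add_distrib]
  exact Finset.sum_congr rfl fun i _ => by ring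

lemma im_sum_mk_mul :
    (∑ i, (⟨a i, -b i⟩ : ℂ) * z i).im = ∑ i, a i * (z i).im - ∑ i, b i * (z i).re := by
  simp only [Complex.im_sum, Complex.mul_im, ← Finset.sum_sub_distrib]
  exact Finset.sum_congr rfl fun i _ => by ring

end RealCombination

section CoeffPairing

variable {K : Type*} [CommRing K] (N : ℕ) (μ : Fin (N + 1) → K)

/-- `μ` as a row vector acting on coefficient vectors in the basis `x^N, …, x, 1`, the row
indexing of `convEntry`. -/
noncomputable def coeffPairing : K[X] →ₗ[K] K :=
  ∑ i, μ i • lcoeff K (N - i)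

lemma coeffPairing_apply (P : K[X]) :
    coeffPairing N μ P = ∑ i, μ i * P.coeff (N - i) := by
  simp [coeffPairing]

lemma coeffPairing_X_pow (i : Fin (N + 1)) : coeffPairing N μ (X ^ (N - i)) = μ i := by
  rw [coeffPairing_apply, Finset.sum_eq_single i]
  · simp
  · intro k _ hki
    rw [coeff_X_pow, if_neg (by omega), mul_zero]
  · simp

variable {N}

lemma sum_mul_convEntry {r j : ℕ} (h : r + j ≤ N) (P : K[X]) :
    ∑ i, μ i * convEntry r P i j = coeffPairing N μ (P * X ^ (N - r - j)) := by
  rw [coeffPairing_apply]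
  refine Finset.sum_congr rfl fun i _ => ?_
  rw [coeff_mul_X_pow', convEntry]
  congr 1
  split_ifs <;> first | rfl | omega | (congr 1; omega)

lemma coeffPairing_mul_eq_sum {e : ℕ} (P : K[X]) {U : K[X]} (hU : U.natDegree ≤ e) :
    coeffPairing N μ (U * P) =
      ∑ k ∈ Finset.range (e + 1), U.coeff k * coeffPairing N μ (P * X ^ k) := by
  conv_lhs => rw [U.as_sum_range' (e + 1) (by omega), Finset.sum_mul, map_sum]
  refine Finset.sum_congr rfl fun k _ => ?_
  rw [← C_mul_X_pow_eq_monomial, mul_assoc, mul_comm (X ^ k), ← smul_eq_C_mul, map_smul,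
    smul_eq_mul]

lemma coeffPairing_mul_eq_zero {e : ℕ} {P : K[X]}
    (hP : ∀ k ≤ e, coeffPairing N μ (P * X ^ k) = 0) {U : K[X]} (hU : U.natDegree ≤ e) :
    coeffPairing N μ (U * P) = 0 := by
  rw [coeffPairing_mul_eq_sum μ P hU]
  exact Finset.sum_eq_zero fun k hk => by
    rw [hP k (Nat.lt_succ_iff.mp (Finset.mem_range.mp hk)), mul_zero]

lemma eq_zero_of_coeffPairing_mul_eq_zero {a b : ℕ} {A B : K[X]}
    (hA : ∀ k ≤ a, coeffPairing N μ (A * X ^ k) = 0)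
    (hB : ∀ k ≤ b, coeffPairing N μ (B * X ^ k) = 0)
    (hspan : ∀ W : K[X], W.natDegree ≤ N →
      ∃ U V : K[X], U.natDegree ≤ a ∧ V.natDegree ≤ b ∧ W = U * A + V * B) :
    μ = 0 := by
  funext i
  obtain ⟨U, V, hU, hV, hW⟩ := hspan (X ^ (N - i)) ((natDegree_X_pow_le _).trans (by omega))
  rw [← coeffPairing_X_pow N μ i, hW, map_add, coeffPairing_mul_eq_zero μ hA hU,
    coeffPairing_mul_eq_zero μ hB hV, add_zero, Pi.zero_apply]

end CoeffPairing

lemma coeffPairing_mul_eq_mul_sum_normSq {N e : ℕ} (μ : Fin (N + 1) → ℂ) {P U : ℂ[X]} (w : ℂ)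
    (hU : U.natDegree ≤ e) (hP : ∀ t ≤ e, coeffPairing N μ (P * X ^ t) = w * conj (U.coeff t)) :
    coeffPairing N μ (U * P) =
      w * ((∑ t ∈ Finset.range (e + 1), Complex.normSq (U.coeff t) : ℝ) : ℂ) := by
  rw [coeffPairing_mul_eq_sum μ P hU, Complex.ofReal_sum, Finset.mul_sum]
  refine Finset.sum_congr rfl fun t ht => ?_
  rw [hP t (Nat.lt_succ_iff.mp (Finset.mem_range.mp ht)), Complex.normSq_eq_conj_mul_self]
  ring

lemma sum_normSq_coeff_pos {e : ℕ} {U : ℂ[X]} (hU0 : U ≠ 0) (hU : U.natDegree ≤ e) :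
    0 < ∑ t ∈ Finset.range (e + 1), Complex.normSq (U.coeff t) :=
  Finset.sum_pos' (fun t _ => Complex.normSq_nonneg _)
    ⟨U.natDegree, Finset.mem_range.mpr (by omega),
      Complex.normSq_pos.mpr (leadingCoeff_ne_zero.mpr hU0)⟩

section Field

variable {K : Type*} [Field K]

/-- Writing `F = gcd F G · F₁`, `G = gcd F G · G₁`, the syzygy forces `F₁ ∣ B`; the degree bound
leaves only `B = c · F₁` with `c` a constant, and then `A = -c · G₁`. -/
lemma isCoprime_of_mul_add_mul_eq_zero [DecidableEq K] {F G A B : K[X]}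
    (hsyz : A * F + B * G = 0) (hF : F ≠ 0) (hB : B ≠ 0)
    (hdeg : B.natDegree + (gcd F G).natDegree ≤ F.natDegree) :
    IsCoprime A B ∧ B.natDegree + (gcd F G).natDegree = F.natDegree := by
  obtain ⟨F₁, G₁, hF₁, hG₁, hunit⟩ := extract_gcd F G
  have hcop : IsCoprime F₁ G₁ := (gcd_isUnit_iff F₁ G₁).mp hunit
  have hg : gcd F G ≠ 0 := fun h => hF (by rw [hF₁, h, zero_mul])
  have hF₁0 : F₁ ≠ 0 := fun h => hF (by rw [hF₁, h, mul_zero])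
  have hsyz₁ : A * F₁ + B * G₁ = 0 :=
    mul_left_cancel₀ hg (by linear_combination hsyz - A * hF₁ - B * hG₁)
  obtain ⟨c, hc⟩ : F₁ ∣ B := hcop.dvd_of_dvd_mul_right ⟨-A, by linear_combination hsyz₁⟩
  have hc0 : c ≠ 0 := fun h => hB (by rw [hc, h, mul_zero])
  have hFdeg : F.natDegree = (gcd F G).natDegree + F₁.natDegree := by
    conv_lhs => rw [hF₁]
    exact natDegree_mul hg hF₁0
  have hBdeg : B.natDegree = F₁.natDegree + c.natDegree := by rw [hc, natDegree_mul hF₁0 hc0]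
  have hcu : IsUnit c :=
    isUnit_iff_degree_eq_zero.mpr <| by
      rw [degree_eq_natDegree hc0, show c.natDegree = 0 by omega]; rfl
  have hA : A = -c * G₁ := mul_left_cancel₀ hF₁0 (by linear_combination hsyz₁ - G₁ * hc)
  refine ⟨?_, by omega⟩
  rw [hA, hc, mul_comm F₁]
  exact (isCoprime_mul_units_left hcu.neg hcu G₁ F₁).mpr hcop.symm

lemma exists_eq_mul_add_mul_of_isCoprime {A B : K[X]} (h : IsCoprime A B) (hB : B ≠ 0)
    {k : ℕ} (hA : A.natDegree ≤ k) (W : K[X]) (hW : W.natDegree ≤ k + B.natDegree) :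
    ∃ U V : K[X], U.natDegree ≤ B.natDegree ∧ V.natDegree ≤ k ∧ W = U * A + V * B := by
  obtain ⟨u, v, huv⟩ := h
  set U := W * u % B
  set V := W * v + W * u / B * A
  have hU : U.natDegree ≤ B.natDegree := natDegree_le_natDegree (degree_mod_lt _ hB).le
  have hrep : W = U * A + V * B := by
    linear_combination (-W) * huv + (-A) * EuclideanDomain.div_add_mod (W * u) B
  refine ⟨U, V, hU, ?_, hrep⟩
  have hVB : (V * B).natDegree ≤ k + B.natDegree := by
    rw [show V * B = W - U * A by linear_combination -hrep]
    exact (natDegree_sub_le _ _).trans (max_le hW (natDegree_mul_le.trans (by omega)))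
  by_cases hV : V = 0
  · simp [hV]
  · rw [natDegree_mul hV hB] at hVB
    omega

end Field

section Jmat

open scoped Matrix

variable {m n d : ℕ} {F G A B : ℂ[X]}

lemma sum_mul_cofactorEntry_left (hdn : d ≤ n) (μ : Fin (m + n - d + 1) → ℂ) {k : ℕ}
    (hk : k ≤ m) :
    ∑ i, μ i * cofactorEntry m n d A B i (m - k) = coeffPairing (m + n - d) μ (A * X ^ k) := by
  simp only [cofactorEntry, if_pos (Nat.sub_le m k)]
  rw [sum_mul_convEntry μ (by omega), show m + n - d - (n - d) - (m - k) = k by omega]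

lemma sum_mul_cofactorEntry_right (hdm : d ≤ m) (μ : Fin (m + n - d + 1) → ℂ) {k : ℕ}
    (hk : k ≤ n) :
    ∑ i, μ i * cofactorEntry m n d A B i (m + 1 + (n - k)) =
      coeffPairing (m + n - d) μ (B * X ^ k) := by
  simp only [cofactorEntry, if_neg (show ¬m + 1 + (n - k) ≤ m by omega),
    show m + 1 + (n - k) - (m + 1) = n - k by omega]
  rw [sum_mul_convEntry μ (by omega), show m + n - d - (m - d) - (n - k) = k by omega]

lemma sum_mul_subresEntry_left (hdn : d ≤ n) (μ : Fin (m + n - d + 1) → ℂ) {t : ℕ}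
    (ht : t ≤ n - d) :
    ∑ i, μ i * subresEntry m n d F G i (n - d - t) = coeffPairing (m + n - d) μ (F * X ^ t) := by
  simp only [subresEntry, if_pos (Nat.sub_le (n - d) t)]
  rw [sum_mul_convEntry μ (by omega), show m + n - d - m - (n - d - t) = t by omega]

lemma sum_mul_subresEntry_right (hdm : d ≤ m) (μ : Fin (m + n - d + 1) → ℂ) {t : ℕ}
    (ht : t ≤ m - d) :
    ∑ i, μ i * subresEntry m n d F G i (n - d + 1 + (m - d - t)) =
      coeffPairing (m + n - d) μ (G * X ^ t) := by
  simp only [subresEntry, if_neg (show ¬n - d + 1 + (m - d - t) ≤ n - d by omega),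
    show n - d + 1 + (m - d - t) - (n - d + 1) = m - d - t by omega]
  rw [sum_mul_convEntry μ (by omega), show m + n - d - n - (m - d - t) = t by omega]

lemma cofactorVec_left {t : ℕ} (ht : t ≤ n - d) :
    cofactorVec m n d A B (n - d - t) = A.coeff t := by
  rw [cofactorVec, if_pos (Nat.sub_le _ _), show n - d - (n - d - t) = t by omega]

lemma cofactorVec_right {t : ℕ} (ht : t ≤ m - d) :
    cofactorVec m n d A B (n - d + 1 + (m - d - t)) = B.coeff t := by
  rw [cofactorVec, if_neg (by omega),
    show m - d - (n - d + 1 + (m - d - t) - (n - d + 1)) = t by omega]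

def jmatWeights {R : ℕ} (g : Unit ⊕ Fin R ⊕ Fin R → ℝ) (i : Fin R) : ℂ :=
  ⟨g (Sum.inr (.inl i)), -g (Sum.inr (.inr i))⟩

lemma vecMul_Jmat_apply (g : Unit ⊕ Fin (m + n - d + 1) ⊕ Fin (m + n - d + 1) → ℝ) (j) :
    (g ᵥ* Jmat m n d F G A B) j = g (Sum.inl ()) * Jmat m n d F G A B (Sum.inl ()) j +
      (∑ i, g (Sum.inr (.inl i)) * Jmat m n d F G A B (Sum.inr (.inl i)) j +
        ∑ i, g (Sum.inr (.inr i)) * Jmat m n d F G A B (Sum.inr (.inr i)) j) := by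
  simp [Matrix.vecMul, dotProduct, Fintype.sum_sum_type]

variable {g : Unit ⊕ Fin (m + n - d + 1) ⊕ Fin (m + n - d + 1) → ℝ}

lemma sum_mul_cofactorEntry_eq_zero (hg : g ᵥ* Jmat m n d F G A B = 0) (j : Fin (m + n + 2)) :
    ∑ i, jmatWeights g i * cofactorEntry m n d A B i j = 0 := by
  have h₁ := congrFun hg (Sum.inl (.inl j))
  have h₂ := congrFun hg (Sum.inl (.inr j))
  rw [Pi.zero_apply, vecMul_Jmat_apply] at h₁ h₂
  simp only [Jmat, Matrix.of_apply,
    cofactorEntry_of_coeff Complex.zero_re (rePoly_coeff A) (rePoly_coeff B),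
    cofactorEntry_of_coeff Complex.zero_im (imPoly_coeff A) (imPoly_coeff B)] at h₁ h₂
  simp only [jmatWeights, Complex.ext_iff, re_sum_mk_mul, im_sum_mk_mul, Complex.zero_re,
    Complex.zero_im]
  simp only [mul_zero, zero_add, mul_neg, Finset.sum_neg_distrib] at h₁ h₂
  constructor <;> linarith

lemma sum_mul_subresEntry_eq (hg : g ᵥ* Jmat m n d F G A B = 0) (j : Fin (m + n - 2 * d + 2)) :
    ∑ i, jmatWeights g i * subresEntry m n d F G i j =
      ((-2 * g (Sum.inl ()) : ℝ) : ℂ) * conj (cofactorVec m n d A B j) := by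
  have h₁ := congrFun hg (Sum.inr (.inl j))
  have h₂ := congrFun hg (Sum.inr (.inr j))
  rw [Pi.zero_apply, vecMul_Jmat_apply] at h₁ h₂
  simp only [Jmat, Matrix.of_apply,
    subresEntry_of_coeff Complex.zero_re (rePoly_coeff F) (rePoly_coeff G),
    subresEntry_of_coeff Complex.zero_im (imPoly_coeff F) (imPoly_coeff G)] at h₁ h₂
  simp only [jmatWeights, Complex.ext_iff, re_sum_mk_mul, im_sum_mk_mul, Complex.re_ofReal_mul,
    Complex.im_ofReal_mul, Complex.conj_re, Complex.conj_im]
  simp only [mul_neg, Finset.sum_neg_distrib] at h₁ h₂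
  constructor <;> linarith

lemma sum_normSq_add_sum_normSq_pos {a b : ℕ} (hA : A.natDegree ≤ a) (hB : B.natDegree ≤ b)
    (hAB : ¬(A = 0 ∧ B = 0)) :
    0 < ∑ t ∈ Finset.range (a + 1), Complex.normSq (A.coeff t) +
      ∑ t ∈ Finset.range (b + 1), Complex.normSq (B.coeff t) := by
  have hsA := Finset.sum_nonneg fun t (_ : t ∈ Finset.range (a + 1)) =>
    Complex.normSq_nonneg (A.coeff t)
  have hsB := Finset.sum_nonneg fun t (_ : t ∈ Finset.range (b + 1)) =>
    Complex.normSq_nonneg (B.coeff t)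
  rcases not_and_or.mp hAB with hA0 | hB0
  · linarith [sum_normSq_coeff_pos hA0 hA]
  · linarith [sum_normSq_coeff_pos hB0 hB]

lemma linearIndependent_row_Jmat (hdm : d ≤ m) (hdn : d ≤ n)
    (hA : A.natDegree ≤ n - d) (hB : B.natDegree ≤ m - d) (hAB : ¬(A = 0 ∧ B = 0))
    (hsyz : A * F + B * G = 0)
    (hspan : ∀ W : ℂ[X], W.natDegree ≤ m + n - d →
      ∃ U V : ℂ[X], U.natDegree ≤ m ∧ V.natDegree ≤ n ∧ W = U * A + V * B) :
    LinearIndependent ℝ (Jmat m n d F G A B).row := by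
  rw [Fintype.linearIndependent_iff]
  intro g hg
  replace hg : g ᵥ* Jmat m n d F G A B = 0 := by rw [Matrix.vecMul_eq_sum]; exact hg
  set μ := jmatWeights g
  set w : ℂ := ((-2 * g (Sum.inl ()) : ℝ) : ℂ)
  have hφA : ∀ k ≤ m, coeffPairing (m + n - d) μ (A * X ^ k) = 0 := fun k hk => by
    rw [← sum_mul_cofactorEntry_left hdn μ hk]
    exact sum_mul_cofactorEntry_eq_zero hg ⟨m - k, by omega⟩
  have hφB : ∀ k ≤ n, coeffPairing (m + n - d) μ (B * X ^ k) = 0 := fun k hk => by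
    rw [← sum_mul_cofactorEntry_right hdm μ hk]
    exact sum_mul_cofactorEntry_eq_zero hg ⟨m + 1 + (n - k), by omega⟩
  have hφF : ∀ t ≤ n - d, coeffPairing (m + n - d) μ (F * X ^ t) = w * conj (A.coeff t) :=
    fun t ht => by
      rw [← sum_mul_subresEntry_left hdn μ ht, ← cofactorVec_left (m := m) (B := B) ht]
      exact sum_mul_subresEntry_eq hg ⟨n - d - t, by omega⟩
  have hφG : ∀ t ≤ m - d, coeffPairing (m + n - d) μ (G * X ^ t) = w * conj (B.coeff t) :=
    fun t ht => by
      rw [← sum_mul_subresEntry_right hdm μ ht, ← cofactorVec_right (n := n) (A := A) ht]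
      exact sum_mul_subresEntry_eq hg ⟨n - d + 1 + (m - d - t), by omega⟩
  have hc : g (Sum.inl ()) = 0 := by
    have h := congrArg (coeffPairing (m + n - d) μ) hsyz
    rw [map_add, map_zero, coeffPairing_mul_eq_mul_sum_normSq μ w hA hφF,
      coeffPairing_mul_eq_mul_sum_normSq μ w hB hφG, ← mul_add, ← Complex.ofReal_add,
      ← Complex.ofReal_mul, Complex.ofReal_eq_zero] at h
    have hpos := sum_normSq_add_sum_normSq_pos hA hB hAB
    rcases mul_eq_zero.mp h with h | h <;> linarith
  have hμ : μ = 0 := eq_zero_of_coeffPairing_mul_eq_zero μ hφA hφB hspan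
  rintro (⟨⟩ | i | i)
  · exact hc
  · simpa [μ, jmatWeights] using congrArg Complex.re (congrFun hμ i)
  · simpa [μ, jmatWeights] using congrArg Complex.im (congrFun hμ i)

end Jmat

theorem jacobian_full_rank_general (m n d : ℕ) (hmn : n ≤ m) (hdn : d < n)
    (F G A B : ℂ[X])
    (hF : F.degree = (m : WithBot ℕ))
    (hA : A.degree ≤ ((n - d : ℕ) : WithBot ℕ)) (hB : B.degree ≤ ((m - d : ℕ) : WithBot ℕ))
    (hAB : ¬(A = 0 ∧ B = 0)) (hsyz : A * F + B * G = 0)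
    (hgcd : (gcd F G).degree ≤ (d : WithBot ℕ)) :
    (Jmat m n d F G A B).rank = 2 * (m + n - d + 1) + 1 := by
  have hdm : d ≤ m := hdn.le.trans hmn
  have hF0 : F ≠ 0 := by rintro rfl; simp at hF
  have hB0 : B ≠ 0 := by rintro rfl; exact hAB ⟨by simpa [hF0] using hsyz, rfl⟩
  have hAdeg := natDegree_le_iff_degree_le.mpr hA
  have hBdeg := natDegree_le_iff_degree_le.mpr hB
  have hgcddeg := natDegree_le_iff_degree_le.mpr hgcd
  have hFdeg := natDegree_eq_of_degree_eq_some hF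
  obtain ⟨hcop, hBgcd⟩ := isCoprime_of_mul_add_mul_eq_zero hsyz hF0 hB0 (by omega)
  have hspan (W : ℂ[X]) (hW : W.natDegree ≤ m + n - d) :
      ∃ U V : ℂ[X], U.natDegree ≤ m ∧ V.natDegree ≤ n ∧ W = U * A + V * B := by
    obtain ⟨U, V, hU, hV, hrep⟩ :=
      exists_eq_mul_add_mul_of_isCoprime hcop hB0 (k := n) (by omega) W (by omega)
    exact ⟨U, V, by omega, hV, hrep⟩
  rw [(linearIndependent_row_Jmat hdm hdn.le hAdeg hBdeg hAB hsyz hspan).rank_matrix]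
  simp only [Fintype.card_sum, Fintype.card_unit, Fintype.card_fin]
  omega

/-- Let `m ≥ n > d > 0`, let `F, G ∈ ℂ[x]` with `deg F = m`, `deg G = n`, and let
`A, B ∈ ℂ[x]` with `deg A ≤ n−d`, `deg B ≤ m−d`, `(A,B) ≠ (0,0)`, `A·F + B·G = 0`,
and suppose the greatest common divisor of `F` and `G` has degree at most `d`.
Then the Jacobian block matrix `J = [[0, 0, 2·v₁ᵗ, 2·v₂ᵗ], [A₁, −A₂, N₁, −N₂],
[A₂, A₁, N₂, N₁]]` has full rank `2(m+n−d+1)+1`. -/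
theorem jacobian_full_rank (m n d : ℕ) (hmn : n ≤ m) (hdn : d < n) (hd : 0 < d)
    (F G A B : ℂ[X])
    (hF : F.degree = (m : WithBot ℕ)) (hG : G.degree = (n : WithBot ℕ))
    (hA : A.degree ≤ ((n - d : ℕ) : WithBot ℕ)) (hB : B.degree ≤ ((m - d : ℕ) : WithBot ℕ))
    (hAB : ¬(A = 0 ∧ B = 0)) (hsyz : A * F + B * G = 0)
    (hgcd : (gcd F G).degree ≤ (d : WithBot ℕ)) :
    (Jmat m n d F G A B).rank = 2 * (m + n - d + 1) + 1 :=
  jacobian_full_rank_general m n d hmn hdn F G A B hF hA hB hAB hsyz hgcd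
end

section
/- Let m ≥ n > d > 0 be integers and let A, B ∈ ℂ[x] be relatively prime with deg A = n−d and deg B = m−d. Let A₁ = [C_m^{n−d}(A_Re) | C_n^{m−d}(B_Re)] and A₂ = [C_m^{n−d}(A_Im) | C_n^{m−d}(B_Im)] (real matrices with m+n−d+1 rows and m+n+2 columns). Then the real block matrix [[A₁, −A₂], [A₂, A₁]] of size 2(m+n−d+1) × 2(m+n+2) has rank exactly 2(m+n−d+1). -/
open Polynomial

/-- The matrix `[C_m^{n-d}(A) | C_n^{m-d}(B)]` of size `(m+n-d+1) × (m+n+2)`. -/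
noncomputable def cofactorMat {K : Type*} [Semiring K] (m n d : ℕ) (A B : K[X]) :
    Matrix (Fin (m + n - d + 1)) (Fin (m + n + 2)) K :=
  Matrix.of fun i j => cofactorEntry m n d A B (i : ℕ) (j : ℕ)

/-!
The complex matrix `M = [C_m^{n-d}(A) | C_n^{m-d}(B)]` sends the coefficients of `(p, q)` to
those of `A p + B q`. Since `A` and `B` are coprime, a Bézout identity with degree control shows
that every polynomial of degree at most `m + n - d` is of this form, so `M` has a right inverse.
The real block matrix is the image of `M` under the multiplicative embedding
`a + b i ↦ [[a, -b], [b, a]]`, hence it has a right inverse too, i.e. full row rank.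
-/

open Polynomial Finset Matrix

theorem sum_convEntry_mul_coeff {K : Type*} [CommSemiring K] (r : ℕ) (P : K[X]) {k i : ℕ}
    (hi : i ≤ r + k) {p : K[X]} (hp : p.natDegree ≤ k) :
    ∑ j ∈ range (k + 1), convEntry r P i j * p.coeff (k - j) = (P * p).coeff (r + k - i) := by
  conv_rhs => rw [p.as_sum_range' (k + 1) (Nat.lt_succ_of_le hp), ← sum_range_reflect,
    mul_sum, finsetSum_coeff]
  refine sum_congr rfl fun j hj => ?_
  have hjk : j ≤ k := Nat.lt_succ_iff.mp (mem_range.mp hj)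
  rw [Nat.add_sub_cancel, ← C_mul_X_pow_eq_monomial, mul_left_comm, coeff_C_mul,
    coeff_mul_X_pow', convEntry, mul_comm]
  congr 1
  by_cases hij : i ≤ r + j
  · rw [if_pos hij, if_pos (by omega)]; congr 1; omega
  · rw [if_neg hij, if_neg (by omega)]

theorem exists_mul_add_mul_eq_of_natDegree_le {K : Type*} [Field K] {A B : K[X]}
    (hAB : IsCoprime A B) (hB₀ : B ≠ 0) {k l : ℕ} (hA : A.natDegree ≤ l + 1)
    (hB : B.natDegree ≤ k + 1) {f : K[X]} (hf : f.natDegree ≤ l + B.natDegree) :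
    ∃ p q : K[X], A * p + B * q = f ∧ p.natDegree ≤ k ∧ q.natDegree ≤ l := by
  obtain ⟨u, v, huv⟩ := hAB
  have hdiv : B * (u * f / B) + u * f % B = u * f := EuclideanDomain.div_add_mod _ _
  set p := u * f % B
  set q := v * f + u * f / B * A
  have hsum : A * p + B * q = f := by linear_combination A * hdiv + f * huv
  have hp : p = 0 ∨ p.natDegree < B.natDegree := by
    by_cases hp₀ : p = 0
    · exact .inl hp₀
    · exact .inr (natDegree_lt_natDegree hp₀ (degree_mod_lt _ hB₀))
  have hAp : (A * p).natDegree ≤ l + B.natDegree := by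
    rcases hp with hp₀ | hp
    · simp [hp₀]
    · exact (natDegree_mul_le).trans (by omega)
  have hpk : p.natDegree ≤ k := by
    rcases hp with hp₀ | hp
    · simp [hp₀]
    · omega
  refine ⟨p, q, hsum, hpk, ?_⟩
  by_cases hq₀ : q = 0
  · simp [hq₀]
  have hBq : (B * q).natDegree ≤ l + B.natDegree := by
    rw [show B * q = f - A * p by linear_combination hsum]
    exact (natDegree_sub_le _ _).trans (max_le hf hAp)
  rw [natDegree_mul hB₀ hq₀] at hBq
  omega

/-- The coefficients of `p` and `q` in the column basis `x^m p, …, p, x^n q, …, q` of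
`cofactorMat m n d A B`. -/
noncomputable def stackedCoeff {K : Type*} [Semiring K] (m n : ℕ) (p q : K[X]) (j : ℕ) : K :=
  if j ≤ m then p.coeff (m - j) else q.coeff (n - (j - (m + 1)))

theorem cofactorMat_mulVec {K : Type*} [CommSemiring K] {m n d : ℕ} (hdn : d ≤ n)
    (hdm : d ≤ m) (A B : K[X]) {p q : K[X]} (hp : p.natDegree ≤ m) (hq : q.natDegree ≤ n)
    (i : Fin (m + n - d + 1)) :
    (cofactorMat m n d A B *ᵥ fun j => stackedCoeff m n p q j) i
      = (A * p + B * q).coeff (m + n - d - i) := by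
  have hi : (i : ℕ) ≤ m + n - d := Nat.lt_succ_iff.mp i.isLt
  simp only [mulVec, dotProduct, cofactorMat, of_apply]
  rw [Fin.sum_univ_eq_sum_range (fun j => cofactorEntry m n d A B i j * stackedCoeff m n p q j),
    show m + n + 2 = (m + 1) + (n + 1) by ring, sum_range_add, coeff_add]
  congr 1
  · rw [show m + n - d - (i : ℕ) = n - d + m - i by omega,
      ← sum_convEntry_mul_coeff _ _ (by omega) hp]
    refine sum_congr rfl fun j hj => ?_
    have hjm : j ≤ m := Nat.lt_succ_iff.mp (mem_range.mp hj)
    simp only [cofactorEntry, stackedCoeff, if_pos hjm]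
  · rw [show m + n - d - (i : ℕ) = m - d + n - i by omega,
      ← sum_convEntry_mul_coeff _ _ (by omega) hq]
    refine sum_congr rfl fun j _ => ?_
    have hjm : ¬ m + 1 + j ≤ m := by omega
    simp only [cofactorEntry, stackedCoeff, if_neg hjm, Nat.add_sub_cancel_left]

theorem cofactorMat_mulVec_surjective {K : Type*} [Field K] {m n d : ℕ} (hdn : d ≤ n)
    (hdm : d ≤ m) {A B : K[X]} (hAB : IsCoprime A B) (hA : A.natDegree = n - d)
    (hB : B.natDegree = m - d) (hB₀ : B ≠ 0) :
    Function.Surjective (cofactorMat m n d A B).mulVec := by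
  intro y
  set f : K[X] := ∑ i, C (y i) * X ^ (m + n - d - i)
  have hf : f.natDegree ≤ n + B.natDegree := by
    rw [hB, ← Nat.add_sub_assoc hdm, add_comm n]
    exact natDegree_sum_le_of_forall_le _ _ fun i _ =>
      (natDegree_C_mul_X_pow_le _ _).trans (Nat.sub_le _ _)
  obtain ⟨p, q, hpq, hp, hq⟩ :=
    exists_mul_add_mul_eq_of_natDegree_le (k := m) hAB hB₀ (by omega) (by omega) hf
  refine ⟨fun j => stackedCoeff m n p q j, funext fun i => ?_⟩
  rw [cofactorMat_mulVec hdn hdm A B hp hq, hpq, finsetSum_coeff,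
    sum_eq_single i (fun j _ hji => ?_) (by simp)]
  · simp
  · have hne : ¬ (m + n - d - i = m + n - d - j) := fun h => hji (Fin.ext (by omega))
    simp [hne]

theorem cofactorMat_eq_map_of_coeff {K L : Type*} [Semiring K] [Semiring L] (f : K → L)
    (hf : f 0 = 0) (m n d : ℕ) {A B : K[X]} {A' B' : L[X]}
    (hA : ∀ k, A'.coeff k = f (A.coeff k)) (hB : ∀ k, B'.coeff k = f (B.coeff k)) :
    cofactorMat m n d A' B' = (cofactorMat m n d A B).map f := by
  ext i j
  simp only [cofactorMat, map_apply, of_apply, cofactorEntry, convEntry]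
  split_ifs <;> simp only [hA, hB, hf]

theorem cofactorMat_rePoly (m n d : ℕ) (A B : ℂ[X]) :
    cofactorMat m n d (rePoly A) (rePoly B) = (cofactorMat m n d A B).map Complex.re :=
  cofactorMat_eq_map_of_coeff _ Complex.zero_re m n d (fun _ => rfl) fun _ => rfl

theorem cofactorMat_imPoly (m n d : ℕ) (A B : ℂ[X]) :
    cofactorMat m n d (imPoly A) (imPoly B) = (cofactorMat m n d A B).map Complex.im :=
  cofactorMat_eq_map_of_coeff _ Complex.zero_im m n d (fun _ => rfl) fun _ => rfl

namespace Matrix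

variable {ι κ ν : Type*}

/-- The real `2 × 2` block form of a complex matrix, extending the embedding
`a + b i ↦ [[a, -b], [b, a]]` of `ℂ` into real `2 × 2` matrices. -/
def realify (M : Matrix ι κ ℂ) : Matrix (ι ⊕ ι) (κ ⊕ κ) ℝ :=
  fromBlocks (M.map Complex.re) (-M.map Complex.im) (M.map Complex.im) (M.map Complex.re)

theorem realify_mul [Fintype κ] (M : Matrix ι κ ℂ) (N : Matrix κ ν ℂ) :
    realify (M * N) = realify M * realify N := by
  simp only [realify, fromBlocks_multiply, fromBlocks_inj]
  refine ⟨?_, ?_, ?_, ?_⟩ <;> ext i j <;>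
    simp [mul_apply, Complex.re_sum, Complex.im_sum, sum_add_distrib, sum_sub_distrib] <;> ring

theorem realify_one [DecidableEq ι] : realify (1 : Matrix ι ι ℂ) = 1 := by
  have him : (1 : Matrix ι ι ℂ).map Complex.im = 0 := by
    ext i j
    by_cases hij : i = j <;> simp [hij]
  rw [realify, Matrix.map_one _ Complex.zero_re Complex.one_re, him, neg_zero, fromBlocks_one]

theorem rank_eq_card_of_mul_eq_one {R : Type*} [CommSemiring R] [StrongRankCondition R]
    [Fintype ι] [DecidableEq ι] [Fintype κ] {M : Matrix ι κ R} {N : Matrix κ ι R}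
    (h : M * N = 1) : M.rank = Fintype.card ι :=
  le_antisymm M.rank_le_card_height <|
    calc Fintype.card ι = (M * N).rank := by rw [h, rank_one]
      _ ≤ M.rank := rank_mul_le_left M N

end Matrix

theorem cofactor_block_rank_general (m n d : ℕ) (hmn : n ≤ m) (hdn : d < n)
    (A B : ℂ[X]) (hcop : IsCoprime A B)
    (hA : A.degree = ((n - d : ℕ) : WithBot ℕ)) (hB : B.degree = ((m - d : ℕ) : WithBot ℕ)) :
    (Matrix.fromBlocks
        (cofactorMat m n d (rePoly A) (rePoly B)) (-(cofactorMat m n d (imPoly A) (imPoly B)))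
        (cofactorMat m n d (imPoly A) (imPoly B)) (cofactorMat m n d (rePoly A) (rePoly B))).rank
      = 2 * (m + n - d + 1) := by
  have hB₀ : B ≠ 0 := by
    rintro rfl
    simp at hB
  obtain ⟨N, hN⟩ := mulVec_surjective_iff_exists_right_inverse.mp <|
    cofactorMat_mulVec_surjective hdn.le (by omega) hcop (natDegree_eq_of_degree_eq_some hA)
      (natDegree_eq_of_degree_eq_some hB) hB₀
  rw [cofactorMat_rePoly, cofactorMat_imPoly]
  change (cofactorMat m n d A B).realify.rank = _
  rw [rank_eq_card_of_mul_eq_one (N := N.realify) (by rw [← realify_mul, hN, realify_one]),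
    Fintype.card_sum, Fintype.card_fin, two_mul]

/-- Let `m ≥ n > d > 0` and let `A, B ∈ ℂ[x]` be relatively prime with `deg A = n−d`
and `deg B = m−d`.  With `A₁ = [C_m^{n−d}(A_Re) | C_n^{m−d}(B_Re)]` and
`A₂ = [C_m^{n−d}(A_Im) | C_n^{m−d}(B_Im)]`, the real block matrix `[[A₁, −A₂], [A₂, A₁]]`
of size `2(m+n−d+1) × 2(m+n+2)` has rank exactly `2(m+n−d+1)`. -/
theorem cofactor_block_rank (m n d : ℕ) (hmn : n ≤ m) (hdn : d < n) (hd : 0 < d)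
    (A B : ℂ[X]) (hcop : IsCoprime A B)
    (hA : A.degree = ((n - d : ℕ) : WithBot ℕ)) (hB : B.degree = ((m - d : ℕ) : WithBot ℕ)) :
    (Matrix.fromBlocks
        (cofactorMat m n d (rePoly A) (rePoly B)) (-(cofactorMat m n d (imPoly A) (imPoly B)))
        (cofactorMat m n d (imPoly A) (imPoly B)) (cofactorMat m n d (rePoly A) (rePoly B))).rank
      = 2 * (m + n - d + 1) :=
  cofactor_block_rank_general m n d hmn hdn A B hcop hA hB
end

section
/- Let m ≥ n > 0 and 0 < d ≤ n be integers, and let F̃, G̃ ∈ ℂ[x] with deg F̃ = m and deg G̃ = n. Suppose A, B ∈ ℂ[x] are relatively prime with deg A ≤ n−d, deg B ≤ m−d, (A,B) ≠ (0,0), and A·F̃ + B·G̃ = 0. Then B divides F̃, and the polynomial H = F̃/B satisfies G̃ = −A·H; in particular H is a common divisor of F̃ and G̃ of degree at least d, so the greatest common divisor of F̃ and G̃ has degree at least d. -/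
open Polynomial

/-!
Coprimality of `A` and `B` in `A F = -B G` forces `B ∣ F`; writing `F = B H`, cancelling `B`
gives `G = -A H`, so `H` divides both `F` and `G`, and `deg H = deg F - deg B ≥ m - (m - d) = d`.
-/

theorem IsCoprime.dvd_of_mul_add_mul_eq_zero {R : Type*} [CommRing R] {A B F G : R}
    (hcop : IsCoprime A B) (hsyz : A * F + B * G = 0) : B ∣ F :=
  hcop.symm.dvd_of_dvd_mul_left ⟨-G, by linear_combination hsyz⟩

theorem IsCoprime.right_ne_zero_of_mul_add_mul_eq_zero {R : Type*} [CommRing R] [IsDomain R]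
    {A B F G : R} (hcop : IsCoprime A B) (hF : F ≠ 0) (hsyz : A * F + B * G = 0) : B ≠ 0 := by
  rintro rfl
  have hA : A = 0 := by simpa [hF] using hsyz
  subst hA
  exact not_isUnit_zero (isCoprime_zero_left.mp hcop)

theorem eq_neg_mul_div_of_mul_add_mul_eq_zero {R : Type*} [EuclideanDomain R] {A B F G : R}
    (hB : B ≠ 0) (hBF : B ∣ F) (hsyz : A * F + B * G = 0) : G = -(A * (F / B)) := by
  obtain ⟨H, rfl⟩ := hBF
  rw [mul_div_cancel_left₀ H hB]
  refine mul_left_cancel₀ hB ?_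
  linear_combination hsyz

theorem Polynomial.natDegree_div_of_dvd {K : Type*} [Field K] {F B : K[X]} (hF : F ≠ 0)
    (hBF : B ∣ F) : (F / B).natDegree = F.natDegree - B.natDegree := by
  obtain ⟨H, rfl⟩ := hBF
  obtain ⟨hB, hH⟩ := mul_ne_zero_iff.mp hF
  rw [mul_div_cancel_left₀ H hB, natDegree_mul hB hH]
  omega

theorem cofactor_syzygy_gcd_degree_ge_general (m n d : ℕ) (hmn : n ≤ m)
    (hdn : d ≤ n)
    (F G A B : ℂ[X]) (hF : F.degree = (m : WithBot ℕ))
    (hcop : IsCoprime A B)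
    (hB : B.degree ≤ ((m - d : ℕ) : WithBot ℕ))
    (hsyz : A * F + B * G = 0) :
    B ∣ F ∧ G = -(A * (F / B)) ∧ (F / B) ∣ F ∧ (F / B) ∣ G ∧
      (d : WithBot ℕ) ≤ (F / B).degree ∧ (d : WithBot ℕ) ≤ (gcd F G).degree := by
  have hF0 : F ≠ 0 := fun h => by simp [h] at hF
  have hBF : B ∣ F := hcop.dvd_of_mul_add_mul_eq_zero hsyz
  have hB0 : B ≠ 0 := hcop.right_ne_zero_of_mul_add_mul_eq_zero hF0 hsyz
  have hG : G = -(A * (F / B)) := eq_neg_mul_div_of_mul_add_mul_eq_zero hB0 hBF hsyz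
  have hHF : F / B ∣ F := EuclideanDomain.div_dvd_of_dvd hBF
  have hHG : F / B ∣ G := ⟨-A, by rw [hG]; ring⟩
  have hH0 : F / B ≠ 0 := ne_zero_of_dvd_ne_zero hF0 hHF
  have hdegH : (d : WithBot ℕ) ≤ (F / B).degree := by
    have hFm : F.natDegree = m := natDegree_eq_of_degree_eq_some hF
    have hBm : B.natDegree ≤ m - d := natDegree_le_iff_degree_le.mpr hB
    rw [degree_eq_natDegree hH0, natDegree_div_of_dvd hF0 hBF]
    exact_mod_cast (by omega : d ≤ F.natDegree - B.natDegree)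
  have hgcd0 : gcd F G ≠ 0 := fun h => hF0 ((gcd_eq_zero_iff F G).mp h).1
  exact ⟨hBF, hG, hHF, hHG, hdegH, hdegH.trans (degree_le_of_dvd (dvd_gcd hHF hHG) hgcd0)⟩

/-- Let `m ≥ n > 0` and `0 < d ≤ n`, and let `F, G ∈ ℂ[x]` with `deg F = m`, `deg G = n`.
Suppose `A, B ∈ ℂ[x]` are relatively prime with `deg A ≤ n−d`, `deg B ≤ m−d`,
`(A,B) ≠ (0,0)`, and `A·F + B·G = 0`.  Then `B` divides `F`, and `H = F/B` satisfies
`G = −A·H`; in particular `H` is a common divisor of `F` and `G` of degree at least `d`,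
so the greatest common divisor of `F` and `G` has degree at least `d`. -/
theorem cofactor_syzygy_gcd_degree_ge (m n d : ℕ) (hmn : n ≤ m) (hn : 0 < n)
    (hd : 0 < d) (hdn : d ≤ n)
    (F G A B : ℂ[X]) (hF : F.degree = (m : WithBot ℕ)) (hG : G.degree = (n : WithBot ℕ))
    (hcop : IsCoprime A B)
    (hA : A.degree ≤ ((n - d : ℕ) : WithBot ℕ)) (hB : B.degree ≤ ((m - d : ℕ) : WithBot ℕ))
    (hAB : ¬(A = 0 ∧ B = 0)) (hsyz : A * F + B * G = 0) :
    B ∣ F ∧ G = -(A * (F / B)) ∧ (F / B) ∣ F ∧ (F / B) ∣ G ∧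
      (d : WithBot ℕ) ≤ (F / B).degree ∧ (d : WithBot ℕ) ≤ (gcd F G).degree :=
  cofactor_syzygy_gcd_degree_ge_general m n d hmn hdn F G A B hF hcop hB hsyz
end

section
/- Let m ≥ n > 0 and 0 < d ≤ n be integers, and let F, G ∈ ℂ[x] with deg F = m and deg G = n. Then the (d−1)-th subresultant matrix N_{d−1}(F,G) has nontrivial kernel if and only if the greatest common divisor of F and G has degree at least d. -/
open Polynomial

/-- The `(d−1)`-th subresultant matrix `N_{d−1}(F,G) = [C_{n−d}^m(F) | C_{m−d}^n(G)]`,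
an `(m+n−d+1) × (m+n−2d+2)` matrix. -/
noncomputable def subresMat {K : Type*} [Semiring K] (m n d : ℕ) (F G : K[X]) :
    Matrix (Fin (m + n - d + 1)) (Fin (m + n - 2*d + 2)) K :=
  Matrix.of fun i j => subresEntry m n d F G (i : ℕ) (j : ℕ)

/-!
The matrix `N_{d-1}(F,G)` represents `(A, B) ↦ A * F + B * G` on pairs with
`deg A ≤ n - d`, `deg B ≤ m - d`, so a kernel vector is a nonzero syzygy of bounded degree.
For such a syzygy `lcm F G ∣ A * F`, whence `m + n - deg (gcd F G) = deg (lcm F G) ≤ n - d + m`;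
conversely `(G / gcd F G, -F / gcd F G)` is a syzygy of the required degrees once
`deg (gcd F G) ≥ d`.
-/

namespace Polynomial

variable {K : Type*} [CommSemiring K]

-- The coefficients are listed in the basis `X ^ k, …, X, 1`, as in the columns of `subresMat`.
noncomputable def ofRevCoeffs (k : ℕ) (w : ℕ → K) : K[X] :=
  ∑ j ∈ Finset.range (k + 1), C (w j) * X ^ (k - j)

theorem natDegree_ofRevCoeffs_le (k : ℕ) (w : ℕ → K) : (ofRevCoeffs k w).natDegree ≤ k :=
  natDegree_sum_le_of_forall_le _ _ fun j _ =>
    natDegree_C_mul_X_pow_le (w j) (k - j) |>.trans (Nat.sub_le k j)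

theorem coeff_ofRevCoeffs_mul (k : ℕ) (w : ℕ → K) (P : K[X]) (e : ℕ) :
    (ofRevCoeffs k w * P).coeff e =
      ∑ j ∈ Finset.range (k + 1), w j * if k - j ≤ e then P.coeff (e - (k - j)) else 0 := by
  simp only [ofRevCoeffs, Finset.sum_mul, finsetSum_coeff, mul_assoc, X_pow_mul, coeff_C_mul,
    coeff_mul_X_pow']

theorem coeff_ofRevCoeffs {k j : ℕ} (w : ℕ → K) (hj : j ≤ k) :
    (ofRevCoeffs k w).coeff (k - j) = w j := by
  rw [ofRevCoeffs, finsetSum_coeff,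
    Finset.sum_eq_single_of_mem j (Finset.mem_range.mpr (Nat.lt_succ_of_le hj))]
  · simp
  · intro i hi hij
    rw [coeff_C_mul_X_pow, if_neg (by rw [Finset.mem_range] at hi; omega)]

theorem ofRevCoeffs_congr {k : ℕ} {w w' : ℕ → K} (h : ∀ j ≤ k, w j = w' j) :
    ofRevCoeffs k w = ofRevCoeffs k w' :=
  Finset.sum_congr rfl fun j hj => by rw [h j (Nat.lt_succ_iff.mp (Finset.mem_range.mp hj))]

theorem ofRevCoeffs_eq_zero_iff {k : ℕ} {w : ℕ → K} :
    ofRevCoeffs k w = 0 ↔ ∀ j ≤ k, w j = 0 := by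
  refine ⟨fun h j hj => by rw [← coeff_ofRevCoeffs w hj, h, coeff_zero], fun h => ?_⟩
  refine Finset.sum_eq_zero fun j hj => ?_
  rw [h j (Nat.lt_succ_iff.mp (Finset.mem_range.mp hj)), C_0, zero_mul]

theorem ofRevCoeffs_coeff_sub {k : ℕ} {p : K[X]} (hp : p.natDegree ≤ k) :
    ofRevCoeffs k (fun j => p.coeff (k - j)) = p := by
  refine (ext_iff_natDegree_le (natDegree_ofRevCoeffs_le k _) hp).mpr fun i hi => ?_
  rw [← Nat.sub_sub_self hi, coeff_ofRevCoeffs _ (Nat.sub_le k i)]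

theorem coeff_ofRevCoeffs_mul_eq_sum_convEntry {r k i : ℕ} (w : ℕ → K) (P : K[X])
    (hi : i ≤ r + k) :
    (ofRevCoeffs k w * P).coeff (r + k - i) =
      ∑ j ∈ Finset.range (k + 1), convEntry r P i j * w j := by
  rw [coeff_ofRevCoeffs_mul]
  refine Finset.sum_congr rfl fun j hj => ?_
  have hj : j ≤ k := Nat.lt_succ_iff.mp (Finset.mem_range.mp hj)
  rw [convEntry, mul_comm]
  congr 1
  split_ifs <;> first | rfl | omega | (congr 1; omega)

end Polynomial

noncomputable def zeroExtend {K : Type*} [Zero K] {N : ℕ} (v : Fin N → K) (k : ℕ) : K :=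
  if h : k < N then v ⟨k, h⟩ else 0

section Subresultant

variable {K : Type*} [CommSemiring K] {m n d : ℕ}

noncomputable def subresCofactorF (m n d : ℕ) (v : Fin (m + n - 2 * d + 2) → K) : K[X] :=
  ofRevCoeffs (n - d) (zeroExtend v)

noncomputable def subresCofactorG (m n d : ℕ) (v : Fin (m + n - 2 * d + 2) → K) : K[X] :=
  ofRevCoeffs (m - d) fun j => zeroExtend v (n - d + 1 + j)

theorem subresMat_mulVec_apply (hdn : d ≤ n) (hdm : d ≤ m) (F G : K[X])
    (v : Fin (m + n - 2 * d + 2) → K) (i : Fin (m + n - d + 1)) :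
    (subresMat m n d F G).mulVec v i =
      (subresCofactorF m n d v * F + subresCofactorG m n d v * G).coeff (m + n - d - i) := by
  have hi : (i : ℕ) ≤ m + n - d := Nat.lt_succ_iff.mp i.isLt
  calc (subresMat m n d F G).mulVec v i
      = ∑ k ∈ Finset.range (m + n - 2 * d + 2), subresEntry m n d F G i k * zeroExtend v k := by
        simp [Matrix.mulVec, dotProduct, subresMat, zeroExtend, ← Fin.sum_univ_eq_sum_range]
    _ = ∑ j ∈ Finset.range (n - d + 1), convEntry m F i j * zeroExtend v j +
          ∑ j ∈ Finset.range (m - d + 1), convEntry n G i j * zeroExtend v (n - d + 1 + j) := by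
        have hsplit (f : ℕ → K) : ∑ k ∈ Finset.range (m + n - 2 * d + 2), f k =
            ∑ k ∈ Finset.range (n - d + 1), f k +
              ∑ k ∈ Finset.range (m - d + 1), f (n - d + 1 + k) := by
          rw [show m + n - 2 * d + 2 = (n - d + 1) + (m - d + 1) by omega, Finset.sum_range_add]
        rw [hsplit]
        congr 1 <;> refine Finset.sum_congr rfl fun j hj => ?_ <;> rw [subresEntry]
        · rw [if_pos (Nat.lt_succ_iff.mp (Finset.mem_range.mp hj))]
        · rw [if_neg (by omega), Nat.add_sub_cancel_left]
    _ = _ := by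
        rw [coeff_add, show m + n - d - i = m + (n - d) - i by omega,
          subresCofactorF, coeff_ofRevCoeffs_mul_eq_sum_convEntry _ _ (by omega),
          show m + (n - d) - i = n + (m - d) - i by omega,
          subresCofactorG, coeff_ofRevCoeffs_mul_eq_sum_convEntry _ _ (by omega)]

theorem subresMat_mulVec_eq_zero_iff (hdn : d ≤ n) (hdm : d ≤ m) {F G : K[X]}
    (hF : F.natDegree ≤ m) (hG : G.natDegree ≤ n) (v : Fin (m + n - 2 * d + 2) → K) :
    (subresMat m n d F G).mulVec v = 0 ↔
      subresCofactorF m n d v * F + subresCofactorG m n d v * G = 0 := by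
  have hdeg : (subresCofactorF m n d v * F + subresCofactorG m n d v * G).natDegree ≤ m + n - d :=
    have hA : (subresCofactorF m n d v).natDegree ≤ n - d := natDegree_ofRevCoeffs_le _ _
    have hB : (subresCofactorG m n d v).natDegree ≤ m - d := natDegree_ofRevCoeffs_le _ _
    natDegree_add_le_of_degree_le (natDegree_mul_le.trans (by omega))
      (natDegree_mul_le.trans (by omega))
  rw [ext_iff_natDegree_le hdeg (natDegree_zero.trans_le (Nat.zero_le _)), funext_iff]
  constructor
  · intro h e he
    have := h ⟨m + n - d - e, by omega⟩
    rwa [subresMat_mulVec_apply hdn hdm, Nat.sub_sub_self he] at this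
  · intro h i
    rw [subresMat_mulVec_apply hdn hdm, h _ (Nat.sub_le _ _), coeff_zero, Pi.zero_apply]

theorem subresCofactors_eq_zero_iff (hdn : d ≤ n) (hdm : d ≤ m)
    (v : Fin (m + n - 2 * d + 2) → K) :
    subresCofactorF m n d v = 0 ∧ subresCofactorG m n d v = 0 ↔ v = 0 := by
  simp only [subresCofactorF, subresCofactorG, ofRevCoeffs_eq_zero_iff]
  constructor
  · rintro ⟨hF, hG⟩
    funext k
    by_cases hk : (k : ℕ) ≤ n - d
    · simpa [zeroExtend] using hF k hk
    · have := hG (k - (n - d + 1)) (by omega)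
      rwa [Nat.add_sub_cancel' (by omega), zeroExtend, dif_pos k.isLt] at this
  · rintro rfl
    simp [zeroExtend]

theorem exists_subresCofactors_eq (hdn : d ≤ n) (hdm : d ≤ m) {A B : K[X]}
    (hA : A.natDegree ≤ n - d) (hB : B.natDegree ≤ m - d) :
    ∃ v : Fin (m + n - 2 * d + 2) → K,
      subresCofactorF m n d v = A ∧ subresCofactorG m n d v = B := by
  refine ⟨fun k => if (k : ℕ) ≤ n - d then A.coeff (n - d - k)
    else B.coeff (m - d - (k - (n - d + 1))), ?_, ?_⟩
  · refine (ofRevCoeffs_congr fun j hj => ?_).trans (ofRevCoeffs_coeff_sub hA)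
    rw [zeroExtend, dif_pos (by omega), Fin.val_mk, if_pos hj]
  · refine (ofRevCoeffs_congr fun j hj => ?_).trans (ofRevCoeffs_coeff_sub hB)
    rw [zeroExtend, dif_pos (by omega), Fin.val_mk, if_neg (by omega), Nat.add_sub_cancel_left]

theorem exists_ne_zero_subresMat_mulVec_eq_zero_iff (hdn : d ≤ n) (hdm : d ≤ m) {F G : K[X]}
    (hF : F.natDegree ≤ m) (hG : G.natDegree ≤ n) :
    (∃ v : Fin (m + n - 2 * d + 2) → K, v ≠ 0 ∧ (subresMat m n d F G).mulVec v = 0) ↔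
      ∃ A B : K[X], (A ≠ 0 ∨ B ≠ 0) ∧ A.natDegree ≤ n - d ∧ B.natDegree ≤ m - d ∧
        A * F + B * G = 0 := by
  constructor
  · rintro ⟨v, hv, hMv⟩
    exact ⟨_, _, not_and_or.mp (mt (subresCofactors_eq_zero_iff hdn hdm v).mp hv),
      natDegree_ofRevCoeffs_le _ _, natDegree_ofRevCoeffs_le _ _,
      (subresMat_mulVec_eq_zero_iff hdn hdm hF hG v).mp hMv⟩
  · rintro ⟨A, B, hAB, hA, hB, hAFBG⟩
    obtain ⟨v, rfl, rfl⟩ := exists_subresCofactors_eq hdn hdm hA hB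
    refine ⟨v, fun hv => ?_, (subresMat_mulVec_eq_zero_iff hdn hdm hF hG v).mpr hAFBG⟩
    rw [← subresCofactors_eq_zero_iff hdn hdm] at hv
    tauto

end Subresultant

section GCD

variable {R : Type*} [CommRing R] [IsDomain R] [GCDMonoid R[X]]

theorem natDegree_gcd_add_natDegree_lcm {F G : R[X]} (hF : F ≠ 0) (hG : G ≠ 0) :
    (gcd F G).natDegree + (lcm F G).natDegree = F.natDegree + G.natDegree := by
  rw [← natDegree_mul (gcd_ne_zero_of_left hF) (lcm_ne_zero_iff.mpr ⟨hF, hG⟩),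
    ← natDegree_mul hF hG]
  exact natDegree_eq_of_degree_eq (degree_eq_degree_of_associated (gcd_mul_lcm F G))

theorem exists_syzygy_iff_le_natDegree_gcd {m n d : ℕ} {F G : R[X]}
    (hF : F.degree = m) (hG : G.degree = n) (hdn : d ≤ n) :
    (∃ A B : R[X], (A ≠ 0 ∨ B ≠ 0) ∧ A.natDegree ≤ n - d ∧ B.natDegree ≤ m - d ∧
        A * F + B * G = 0) ↔ d ≤ (gcd F G).natDegree := by
  have hF0 : F ≠ 0 := ne_zero_of_coe_le_degree hF.ge
  have hG0 : G ≠ 0 := ne_zero_of_coe_le_degree hG.ge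
  have hg0 : gcd F G ≠ 0 := gcd_ne_zero_of_left hF0
  have hsum := natDegree_gcd_add_natDegree_lcm hF0 hG0
  rw [natDegree_eq_of_degree_eq_some hF, natDegree_eq_of_degree_eq_some hG] at hsum
  constructor
  · rintro ⟨A, B, hAB, hA, -, hAFBG⟩
    have hA0 : A ≠ 0 := by
      rintro rfl
      rw [zero_mul, zero_add, mul_eq_zero] at hAFBG
      exact hAB.elim (· rfl) fun hB => hAFBG.elim hB hG0
    have hGdvd : G ∣ A * F := ⟨-B, by linear_combination hAFBG⟩
    have hlcm := natDegree_le_of_dvd (lcm_dvd (dvd_mul_left F A) hGdvd) (mul_ne_zero hA0 hF0)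
    rw [natDegree_mul hA0 hF0, natDegree_eq_of_degree_eq_some hF] at hlcm
    omega
  · intro hd
    obtain ⟨F₁, hF₁⟩ := gcd_dvd_left F G
    obtain ⟨G₁, hG₁⟩ := gcd_dvd_right F G
    have hF₁0 : F₁ ≠ 0 := right_ne_zero_of_mul (hF₁ ▸ hF0)
    have hG₁0 : G₁ ≠ 0 := right_ne_zero_of_mul (hG₁ ▸ hG0)
    have hm : m = (gcd F G).natDegree + F₁.natDegree := by
      rw [← natDegree_mul hg0 hF₁0, ← hF₁, natDegree_eq_of_degree_eq_some hF]
    have hn : n = (gcd F G).natDegree + G₁.natDegree := by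
      rw [← natDegree_mul hg0 hG₁0, ← hG₁, natDegree_eq_of_degree_eq_some hG]
    refine ⟨G₁, -F₁, Or.inl hG₁0, by omega, by rw [natDegree_neg]; omega, ?_⟩
    linear_combination G₁ * hF₁ - F₁ * hG₁

end GCD

theorem subresMat_kernel_nontrivial_iff_general (m n d : ℕ) (hmn : n ≤ m)
    (hdn : d ≤ n)
    (F G : ℂ[X]) (hF : F.degree = (m : WithBot ℕ)) (hG : G.degree = (n : WithBot ℕ)) :
    (∃ v : Fin (m + n - 2*d + 2) → ℂ, v ≠ 0 ∧ (subresMat m n d F G).mulVec v = 0)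
      ↔ (d : WithBot ℕ) ≤ (gcd F G).degree := by
  have hg0 : gcd F G ≠ 0 := gcd_ne_zero_of_left (ne_zero_of_coe_le_degree hF.ge)
  rw [exists_ne_zero_subresMat_mulVec_eq_zero_iff hdn (hdn.trans hmn)
      (natDegree_le_of_degree_le hF.le) (natDegree_le_of_degree_le hG.le),
    exists_syzygy_iff_le_natDegree_gcd hF hG hdn, degree_eq_natDegree hg0, Nat.cast_le]

/-- Let `m ≥ n > 0` and `0 < d ≤ n`, and let `F, G ∈ ℂ[x]` with `deg F = m` and
`deg G = n`.  Then the `(d−1)`-th subresultant matrix `N_{d−1}(F,G)` has nontrivial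
kernel if and only if the greatest common divisor of `F` and `G` has degree at least `d`. -/
theorem subresMat_kernel_nontrivial_iff (m n d : ℕ) (hmn : n ≤ m) (hn : 0 < n)
    (hd : 0 < d) (hdn : d ≤ n)
    (F G : ℂ[X]) (hF : F.degree = (m : WithBot ℕ)) (hG : G.degree = (n : WithBot ℕ)) :
    (∃ v : Fin (m + n - 2*d + 2) → ℂ, v ≠ 0 ∧ (subresMat m n d F G).mulVec v = 0)
      ↔ (d : WithBot ℕ) ≤ (gcd F G).degree :=
  subresMat_kernel_nontrivial_iff_general m n d hmn hdn F G hF hG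
end

section
/- Let m ≥ n > 0 and 0 < d ≤ n be integers, and let F, G ∈ ℂ[x] with deg F = m and deg G = n. If the greatest common divisor of F and G has degree exactly d, then the kernel of the (d−1)-th subresultant matrix N_{d−1}(F,G) has dimension exactly 1 over ℂ. -/
/-!
A kernel vector of `N_{d-1}(F, G)` is the coefficient vector of a pair `(A, B)` with
`deg A ≤ n - d`, `deg B ≤ m - d` and `A * F + B * G = 0`. Write `F = H * F₁`, `G = H * G₁` with
`H = gcd F G` of degree `d`. Cancelling `H` gives `A * F₁ = -B * G₁` with `F₁`, `G₁` coprime, so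
`G₁ ∣ A`; since `deg G₁ = n - d ≥ deg A`, `A` is a scalar multiple `c * G₁`, and then `B = -c * F₁`.
So the kernel is the line spanned by the (nonzero) coefficient vector of `(G₁, -F₁)`.
-/

open Polynomial

namespace Polynomial

section Semiring

variable {R : Type*} [Semiring R]

theorem coeff_monomial_mul' (a k : ℕ) (c : R) (P : R[X]) :
    (monomial a c * P).coeff k = if a ≤ k then c * P.coeff (k - a) else 0 := by
  rw [← C_mul_X_pow_eq_monomial, mul_assoc, coeff_C_mul, coeff_X_pow_mul', mul_ite, mul_zero]

theorem degree_eq_sub_of_eq_mul [NoZeroDivisors R] {P H Q : R[X]} {p h : ℕ}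
    (hP : P.degree = p) (hH : H.degree = h) (hPHQ : P = H * Q) : Q.degree = ↑(p - h) := by
  have hQ : Q ≠ 0 := by rintro rfl; simp [hPHQ] at hP
  have hH0 : H ≠ 0 := by rintro rfl; simp at hH
  rw [degree_eq_natDegree hQ, Nat.cast_inj]
  have := natDegree_mul hH0 hQ
  rw [← hPHQ, natDegree_eq_of_degree_eq_some hP, natDegree_eq_of_degree_eq_some hH] at this
  omega

end Semiring

theorem exists_eq_C_mul_of_mul_add_mul_eq_zero {R : Type*} [CommRing R] [IsDomain R]
    {A B P Q : R[X]} (hPQ : IsCoprime P Q) (hQ : Q ≠ 0) (hA : A.natDegree ≤ Q.natDegree)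
    (h : A * P + B * Q = 0) : ∃ c, A = C c * Q ∧ B = -(C c * P) := by
  obtain ⟨S, rfl⟩ : Q ∣ A := hPQ.symm.dvd_of_dvd_mul_right ⟨-B, by linear_combination h⟩
  have hS : S.natDegree = 0 := by
    rcases eq_or_ne S 0 with rfl | hS
    · rfl
    · have := natDegree_mul hQ hS
      omega
  obtain ⟨c, rfl⟩ : ∃ c, S = C c := ⟨_, eq_C_of_natDegree_eq_zero hS⟩
  refine ⟨c, mul_comm _ _, ?_⟩
  have : Q * (B + C c * P) = 0 := by linear_combination h
  linear_combination (mul_eq_zero.mp this).resolve_left hQ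

end Polynomial

namespace Subres

variable {K : Type*} (m n d : ℕ)

section CommSemiring

variable [CommSemiring K]

/- Column `j ≤ n - d` of `subresMat m n d F G` is the coefficient vector of `X ^ (n - d - j) * F`,
column `n - d + 1 + j` that of `X ^ (m - d - j) * G`. Accordingly `polyA`, `polyB` read a vector
as the pair `(A, B)` it encodes, and `vec` is the inverse encoding. -/

noncomputable def polyA (v : Fin (m + n - 2*d + 2) → K) : K[X] :=
  ∑ j : Fin (m + n - 2*d + 2), if (j : ℕ) ≤ n - d then monomial (n - d - j) (v j) else 0

noncomputable def polyB (v : Fin (m + n - 2*d + 2) → K) : K[X] :=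
  ∑ j : Fin (m + n - 2*d + 2),
    if (j : ℕ) ≤ n - d then 0 else monomial (m - d - (j - (n - d + 1))) (v j)

def vec (A B : K[X]) : Fin (m + n - 2*d + 2) → K := fun j =>
  if (j : ℕ) ≤ n - d then A.coeff (n - d - j) else B.coeff (m - d - (j - (n - d + 1)))

variable {m n d}

theorem natDegree_polyA_le (v : Fin (m + n - 2*d + 2) → K) :
    (polyA m n d v).natDegree ≤ n - d :=
  natDegree_sum_le_of_forall_le _ _ fun j _ => by
    split_ifs
    · exact (natDegree_monomial_le _).trans (Nat.sub_le _ _)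
    · simp

theorem natDegree_polyB_le (v : Fin (m + n - 2*d + 2) → K) :
    (polyB m n d v).natDegree ≤ m - d :=
  natDegree_sum_le_of_forall_le _ _ fun j _ => by
    split_ifs
    · simp
    · exact (natDegree_monomial_le _).trans (Nat.sub_le _ _)

theorem coeff_polyA (v : Fin (m + n - 2*d + 2) → K) (j : Fin (m + n - 2*d + 2))
    (hj : (j : ℕ) ≤ n - d) : (polyA m n d v).coeff (n - d - j) = v j := by
  rw [polyA, finsetSum_coeff, Fintype.sum_eq_single j]
  · simp [hj]
  · intro k hk
    split_ifs
    · rw [coeff_monomial, if_neg]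
      exact fun h => hk (Fin.ext (by omega))
    · exact coeff_zero _

theorem coeff_polyB (v : Fin (m + n - 2*d + 2) → K) (j : Fin (m + n - 2*d + 2))
    (hj : n - d < j) : (polyB m n d v).coeff (m - d - (j - (n - d + 1))) = v j := by
  rw [polyB, finsetSum_coeff, Fintype.sum_eq_single j]
  · simp [hj.not_ge]
  · intro k hk
    split_ifs
    · exact coeff_zero _
    · rw [coeff_monomial, if_neg]
      exact fun h => hk (Fin.ext (by omega))

theorem vec_polyA_polyB (v : Fin (m + n - 2*d + 2) → K) :
    vec m n d (polyA m n d v) (polyB m n d v) = v := by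
  funext j
  unfold vec
  split_ifs with hj
  · exact coeff_polyA v j hj
  · exact coeff_polyB v j (not_le.mp hj)

theorem polyA_vec (hdm : d ≤ m) {A : K[X]} (hA : A.natDegree ≤ n - d) (B : K[X]) :
    polyA m n d (vec m n d A B) = A := by
  ext k
  rcases le_or_gt k (n - d) with hk | hk
  · let j : Fin (m + n - 2*d + 2) := ⟨n - d - k, by omega⟩
    have hj : (j : ℕ) ≤ n - d := Nat.sub_le _ _
    rw [show k = n - d - j by simp only [j]; omega, coeff_polyA _ j hj, vec, if_pos hj]
  · rw [coeff_eq_zero_of_natDegree_lt ((natDegree_polyA_le _).trans_lt hk),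
      coeff_eq_zero_of_natDegree_lt (hA.trans_lt hk)]

theorem polyB_vec (hdn : d ≤ n) (hdm : d ≤ m) (A : K[X]) {B : K[X]}
    (hB : B.natDegree ≤ m - d) : polyB m n d (vec m n d A B) = B := by
  ext k
  rcases le_or_gt k (m - d) with hk | hk
  · let j : Fin (m + n - 2*d + 2) := ⟨n - d + 1 + (m - d - k), by omega⟩
    have hj : n - d < (j : ℕ) := by simp only [j]; omega
    rw [show k = m - d - (j - (n - d + 1)) by simp only [j]; omega, coeff_polyB _ j hj, vec,
      if_neg hj.not_ge]
  · rw [coeff_eq_zero_of_natDegree_lt ((natDegree_polyB_le _).trans_lt hk),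
      coeff_eq_zero_of_natDegree_lt (hB.trans_lt hk)]

theorem vec_C_mul (c : K) (A B : K[X]) :
    vec m n d (C c * A) (C c * B) = c • vec m n d A B := by
  funext j
  simp only [vec, coeff_C_mul, Pi.smul_apply, smul_eq_mul, mul_ite]

theorem vec_ne_zero {A : K[X]} (hA : A.degree = ↑(n - d)) (B : K[X]) : vec m n d A B ≠ 0 := by
  intro h
  have := congrFun h ⟨0, by omega⟩
  simp only [vec, Nat.zero_le, if_true, Nat.sub_zero, Pi.zero_apply] at this
  exact leadingCoeff_ne_zero.mpr (ne_zero_of_degree_gt (n := ⊥) (by simp [hA]))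
    (natDegree_eq_of_degree_eq_some hA ▸ this)

theorem subresMat_mul_apply (hdn : d ≤ n) (hdm : d ≤ m) (F G : K[X])
    (v : Fin (m + n - 2*d + 2) → K) (i : Fin (m + n - d + 1)) (j : Fin (m + n - 2*d + 2)) :
    subresMat m n d F G i j * v j =
      (if (j : ℕ) ≤ n - d then monomial (n - d - j) (v j) * F
        else monomial (m - d - (j - (n - d + 1))) (v j) * G).coeff (m + n - d - i) := by
  have hi := i.isLt
  have hj := j.isLt
  simp only [subresMat, Matrix.of_apply, subresEntry, convEntry]
  split_ifs <;> simp only [coeff_monomial_mul'] <;> split_ifs <;>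
    first | (rw [mul_comm]; congr 2; omega) | simp

theorem subresMat_mulVec_apply (hdn : d ≤ n) (hdm : d ≤ m) (F G : K[X])
    (v : Fin (m + n - 2*d + 2) → K) (i : Fin (m + n - d + 1)) :
    (subresMat m n d F G).mulVec v i =
      (polyA m n d v * F + polyB m n d v * G).coeff (m + n - d - i) := by
  simp only [Matrix.mulVec, dotProduct, subresMat_mul_apply hdn hdm, polyA, polyB,
    Finset.sum_mul, ← Finset.sum_add_distrib, finsetSum_coeff]
  refine Finset.sum_congr rfl fun j _ => ?_
  split_ifs <;> simp

theorem subresMat_mulVec_eq_zero_iff (hdn : d ≤ n) (hdm : d ≤ m) {F G : K[X]}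
    (hF : F.natDegree ≤ m) (hG : G.natDegree ≤ n) (v : Fin (m + n - 2*d + 2) → K) :
    (subresMat m n d F G).mulVec v = 0 ↔ polyA m n d v * F + polyB m n d v * G = 0 := by
  have hdeg : (polyA m n d v * F + polyB m n d v * G).natDegree ≤ m + n - d :=
    natDegree_add_le_of_degree_le
      (natDegree_mul_le.trans (by have := natDegree_polyA_le (m := m) v; omega))
      (natDegree_mul_le.trans (by have := natDegree_polyB_le (n := n) v; omega))
  constructor
  · intro h
    ext k
    rcases le_or_gt k (m + n - d) with hk | hk
    · have := congrFun h ⟨m + n - d - k, by omega⟩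
      rwa [subresMat_mulVec_apply hdn hdm, Nat.sub_sub_self hk] at this
    · exact coeff_eq_zero_of_natDegree_lt (hdeg.trans_lt hk)
  · intro h
    funext i
    rw [subresMat_mulVec_apply hdn hdm, h, coeff_zero, Pi.zero_apply]

end CommSemiring

theorem ker_subresMat_mulVecLin {K : Type*} [CommRing K] [IsDomain K] {m n d : ℕ}
    (hdn : d ≤ n) (hdm : d ≤ m) {H F₁ G₁ : K[X]} (hH : H.degree = d) (hcop : IsCoprime F₁ G₁)
    (hF₁ : F₁.natDegree ≤ m - d) (hG₁ : G₁.degree = ↑(n - d)) :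
    LinearMap.ker (subresMat m n d (H * F₁) (H * G₁)).mulVecLin =
      Submodule.span K {vec m n d G₁ (-F₁)} := by
  have hH0 : H ≠ 0 := ne_zero_of_degree_gt (n := ⊥) (by simp [hH])
  have hG₁0 : G₁ ≠ 0 := ne_zero_of_degree_gt (n := ⊥) (by simp [hG₁])
  have hHd : H.natDegree = d := natDegree_eq_of_degree_eq_some hH
  have hG₁d : G₁.natDegree = n - d := natDegree_eq_of_degree_eq_some hG₁
  have mem_ker_iff (v : Fin (m + n - 2*d + 2) → K) :
      v ∈ LinearMap.ker (subresMat m n d (H * F₁) (H * G₁)).mulVecLin ↔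
        polyA m n d v * F₁ + polyB m n d v * G₁ = 0 := by
    rw [LinearMap.mem_ker, Matrix.mulVecLin_apply, subresMat_mulVec_eq_zero_iff hdn hdm
      (natDegree_mul_le.trans (by omega)) (natDegree_mul_le.trans (by omega)),
      show polyA m n d v * (H * F₁) + polyB m n d v * (H * G₁) =
        H * (polyA m n d v * F₁ + polyB m n d v * G₁) by ring, mul_eq_zero, or_iff_right hH0]
  apply le_antisymm
  · intro v hv
    obtain ⟨c, hA, hB⟩ := exists_eq_C_mul_of_mul_add_mul_eq_zero hcop hG₁0
      (hG₁d ▸ natDegree_polyA_le v) ((mem_ker_iff v).mp hv)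
    refine Submodule.mem_span_singleton.mpr ⟨c, ?_⟩
    rw [← vec_C_mul, mul_neg, ← hA, ← hB, vec_polyA_polyB]
  · rw [Submodule.span_singleton_le_iff_mem, mem_ker_iff,
      polyA_vec hdm hG₁d.le, polyB_vec hdn hdm _ (by rwa [natDegree_neg])]
    ring

end Subres

open Subres in
theorem subresMat_kernel_dim_one_general (m n d : ℕ) (hmn : n ≤ m)
    (hdn : d ≤ n)
    (F G : ℂ[X]) (hF : F.degree = (m : WithBot ℕ)) (hG : G.degree = (n : WithBot ℕ))
    (hgcd : (gcd F G).degree = (d : WithBot ℕ)) :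
    Module.finrank ℂ (LinearMap.ker (subresMat m n d F G).mulVecLin) = 1 := by
  obtain ⟨F₁, G₁, hFfac, hGfac, hunit⟩ := extract_gcd F G
  have hG₁ := degree_eq_sub_of_eq_mul hG hgcd hGfac
  have hker := ker_subresMat_mulVecLin hdn (hdn.trans hmn) hgcd
    ((gcd_isUnit_iff F₁ G₁).mp hunit)
    (natDegree_le_of_degree_le (degree_eq_sub_of_eq_mul hF hgcd hFfac).le) hG₁
  rw [← hFfac, ← hGfac] at hker
  rw [hker]
  exact finrank_span_singleton (vec_ne_zero hG₁ _)

/-- Let `m ≥ n > 0` and `0 < d ≤ n`, and let `F, G ∈ ℂ[x]` with `deg F = m` and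
`deg G = n`.  If the greatest common divisor of `F` and `G` has degree exactly `d`,
then the kernel of the `(d−1)`-th subresultant matrix `N_{d−1}(F,G)` has dimension
exactly `1` over `ℂ`. -/
theorem subresMat_kernel_dim_one (m n d : ℕ) (hmn : n ≤ m) (hn : 0 < n)
    (hd : 0 < d) (hdn : d ≤ n)
    (F G : ℂ[X]) (hF : F.degree = (m : WithBot ℕ)) (hG : G.degree = (n : WithBot ℕ))
    (hgcd : (gcd F G).degree = (d : WithBot ℕ)) :
    Module.finrank ℂ (LinearMap.ker (subresMat m n d F G).mulVecLin) = 1 :=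
  subresMat_kernel_dim_one_general m n d hmn hdn F G hF hG hgcd
end
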